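/- Let A be analytic on the open unit disc 𝔻 and suppose there are a constant 0 ≤ K < ∞ and a function ε : [0,1) → [0,∞) with ε(r) → 0 as r → 1⁻ such that |A(z)|(1−|z|²)² ≤ K + ε(|z|) for all z ∈ 𝔻. Then every solution f of f'' + A f = 0 satisfies sup_{z∈𝔻} |f(z)|(1−|z|²)^p < ∞ for every p with (√(1+K)−1)/2 < p < ∞. -/

import Mathlib

/-!
Along a ray `s ↦ s ζ`, Taylor's formula with integral remainder and `f'' = -A f` give the Volterra
inequality `u r ≤ C + ∫₀^r (r - s) a(s) u(s) ds` for `u s = |f (s ζ)|`, `a s = |A (s ζ)|`.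
Since `p > (√(1 + K) - 1) / 2` means `K < 4 p (p + 1)`, close to the boundary
`a s (1 - s)² ≤ p (p + 1)`, and there `B (1 - r)⁻ᵖ`, whose second derivative is
`p (p + 1) B (1 - r)⁻ᵖ⁻²`, is a supersolution. A comparison principle bounds `u` by it, with `B`
depending only on bounds for `f` and `A` on a fixed disc, hence uniformly in `ζ`.
-/

open Complex Metric Filter Topology Set MeasureTheory intervalIntegral

theorem taylor_integral_remainder_two {E : Type*} [NormedAddCommGroup E] [NormedSpace ℝ E]
    [CompleteSpace E] {g g' g'' : ℝ → E} {a b : ℝ} (hab : a ≤ b)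
    (hg : ∀ s ∈ Icc a b, HasDerivAt g (g' s) s) (hg' : ∀ s ∈ Icc a b, HasDerivAt g' (g'' s) s)
    (hg'' : ContinuousOn g'' (Icc a b)) :
    g b = g a + (b - a) • g' a + ∫ s in a..b, (b - s) • g'' s := by
  have hF : ∀ s ∈ uIcc a b,
      HasDerivAt (fun t => g t + (b - t) • g' t) ((b - s) • g'' s) s := by
    intro s hs
    rw [uIcc_of_le hab] at hs
    refine ((hg s hs).add (((hasDerivAt_const s b).sub (hasDerivAt_id s)).smul
      (hg' s hs))).congr_deriv ?_
    simp only [zero_sub, neg_smul, one_smul]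
    abel
  rw [integral_eq_sub_of_hasDerivAt hF
    (((continuousOn_const.sub continuousOn_id).smul hg'').intervalIntegrable_of_Icc hab)]
  simp only [sub_self, zero_smul, add_zero]
  abel

theorem intervalIntegrable_sub_mul_mul {a u : ℝ → ℝ} {r s t : ℝ} (hst : s ≤ t)
    (ha : ContinuousOn a (Icc s t)) (hu : ContinuousOn u (Icc s t)) :
    IntervalIntegrable (fun x => (r - x) * (a x * u x)) volume s t :=
  ((continuousOn_const.sub continuousOn_id).mul (ha.mul hu)).intervalIntegrable_of_Icc hst

theorem volterra_comparison {u v a : ℝ → ℝ} {r₀ R C : ℝ} (hr₀ : r₀ < R)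
    (hu : ContinuousOn u (Ico r₀ R)) (hv : ContinuousOn v (Ico r₀ R))
    (ha : ContinuousOn a (Ico r₀ R)) (ha0 : ∀ s ∈ Ico r₀ R, 0 ≤ a s)
    (hu_le : ∀ r ∈ Ico r₀ R, u r ≤ C + ∫ s in r₀..r, (r - s) * (a s * u s))
    (hv_gt : ∀ r ∈ Ico r₀ R, C + ∫ s in r₀..r, (r - s) * (a s * v s) < v r) :
    ∀ r ∈ Ico r₀ R, u r < v r := by
  by_contra! ⟨r₁, hr₁, hvu⟩
  have hIcc : Icc r₀ r₁ ⊆ Ico r₀ R := fun x hx => ⟨hx.1, hx.2.trans_lt hr₁.2⟩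
  -- the first point where `v ≤ u`
  obtain ⟨rs, ⟨hrs, hvu_rs⟩, hleast⟩ :=
    (isCompact_Icc.of_isClosed_subset (isClosed_Icc.isClosed_le (hv.mono hIcc) (hu.mono hIcc))
      (sep_subset _ _)).exists_isLeast ⟨r₁, ⟨hr₁.1, le_rfl⟩, hvu⟩
  have hrs_mem : rs ∈ Ico r₀ R := hIcc hrs
  have hr₀rs : r₀ < rs := by
    refine hrs.1.lt_of_ne fun h => ?_
    have hu₀ := hu_le r₀ ⟨le_rfl, hr₀⟩
    have hv₀ := hv_gt r₀ ⟨le_rfl, hr₀⟩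
    simp only [integral_same, add_zero] at hu₀ hv₀
    rw [← h] at hvu_rs
    linarith
  have hlt : ∀ s ∈ Ico r₀ rs, u s < v s := fun s hs => by
    by_contra! h
    exact (hleast ⟨⟨hs.1, hs.2.le.trans hrs.2⟩, h⟩).not_gt hs.2
  have hIcc_rs : Icc r₀ rs ⊆ Ico r₀ R := fun x hx => ⟨hx.1, hx.2.trans_lt hrs_mem.2⟩
  have hmono : (∫ s in r₀..rs, (rs - s) * (a s * u s)) ≤ ∫ s in r₀..rs, (rs - s) * (a s * v s) := by
    refine integral_mono_on hr₀rs.le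
      (intervalIntegrable_sub_mul_mul hr₀rs.le (ha.mono hIcc_rs) (hu.mono hIcc_rs))
      (intervalIntegrable_sub_mul_mul hr₀rs.le (ha.mono hIcc_rs) (hv.mono hIcc_rs)) fun s hs => ?_
    rcases hs.2.eq_or_lt with h | h
    · simp [h]
    · exact mul_le_mul_of_nonneg_left
        (mul_le_mul_of_nonneg_left (hlt s ⟨hs.1, h⟩).le (ha0 s (hIcc_rs hs))) (by linarith)
  linarith [hu_le rs hrs_mem, hv_gt rs hrs_mem]

theorem hasDerivAt_one_sub_rpow {s : ℝ} (q : ℝ) (hs : s < 1) :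
    HasDerivAt (fun t : ℝ => (1 - t) ^ q) (-q * (1 - s) ^ (q - 1)) s := by
  refine (((hasDerivAt_id s).const_sub 1).rpow_const (p := q)
    (Or.inl (sub_pos.mpr hs).ne')).congr_deriv ?_
  simp only [id]
  ring

/-- `v r = B (1 - r)⁻ᵖ` satisfies `v'' = p (p + 1) v / (1 - r)²`, hence `a v ≤ v''`. -/
theorem mul_one_sub_rpow_neg_add_integral_le {a : ℝ → ℝ} {p B r₀ r : ℝ} (hp : 0 ≤ p)
    (hB : 0 ≤ B) (hr₀r : r₀ ≤ r) (hr : r < 1) (ha : ContinuousOn a (Icc r₀ r))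
    (hal : ∀ s ∈ Icc r₀ r, a s * (1 - s) ^ 2 ≤ p * (p + 1)) :
    B * (1 - r₀) ^ (-p) + ∫ s in r₀..r, (r - s) * (a s * (B * (1 - s) ^ (-p))) ≤
      B * (1 - r) ^ (-p) := by
  have hlt : ∀ s ∈ Icc r₀ r, s < 1 := fun s hs => hs.2.trans_lt hr
  have hd : ∀ s ∈ Icc r₀ r,
      HasDerivAt (fun t => B * (1 - t) ^ (-p)) (B * p * (1 - s) ^ (-p - 1)) s := fun s hs => by
    refine ((hasDerivAt_one_sub_rpow (-p) (hlt s hs)).const_mul B).congr_deriv ?_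
    ring
  have hd' : ∀ s ∈ Icc r₀ r, HasDerivAt (fun t => B * p * (1 - t) ^ (-p - 1))
      (B * (p * (p + 1)) * (1 - s) ^ (-p - 2)) s := fun s hs => by
    refine ((hasDerivAt_one_sub_rpow (-p - 1) (hlt s hs)).const_mul (B * p)).congr_deriv ?_
    rw [show -p - 1 - 1 = -p - 2 by ring]
    ring
  have hrpow : ∀ q : ℝ, ContinuousOn (fun s => (1 - s) ^ q) (Icc r₀ r) := fun q =>
    (continuousOn_const.sub continuousOn_id).rpow_const fun s hs =>
      Or.inl (sub_pos.mpr (hlt s hs)).ne'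
  have hcont : ContinuousOn (fun s => B * (p * (p + 1)) * (1 - s) ^ (-p - 2)) (Icc r₀ r) :=
    continuousOn_const.mul (hrpow _)
  have htaylor := taylor_integral_remainder_two hr₀r hd hd' hcont
  simp only [smul_eq_mul] at htaylor
  have hsuper : ∀ s ∈ Icc r₀ r, (r - s) * (a s * (B * (1 - s) ^ (-p))) ≤
      (r - s) * (B * (p * (p + 1)) * (1 - s) ^ (-p - 2)) := fun s hs => by
    have h1s : 0 < 1 - s := sub_pos.mpr (hlt s hs)
    have hsplit : (1 - s) ^ (-p) = (1 - s) ^ (-p - 2) * (1 - s) ^ 2 := by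
      rw [← Real.rpow_natCast, ← Real.rpow_add h1s]
      norm_num
    refine mul_le_mul_of_nonneg_left ?_ (by linarith [hs.2])
    calc a s * (B * (1 - s) ^ (-p)) = B * (1 - s) ^ (-p - 2) * (a s * (1 - s) ^ 2) := by
          rw [hsplit]; ring
      _ ≤ B * (1 - s) ^ (-p - 2) * (p * (p + 1)) :=
          mul_le_mul_of_nonneg_left (hal s hs) (by positivity)
      _ = B * (p * (p + 1)) * (1 - s) ^ (-p - 2) := by ring
  have hv : ContinuousOn (fun s => B * (1 - s) ^ (-p)) (Icc r₀ r) :=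
    continuousOn_const.mul (hrpow _)
  have hmono : (∫ s in r₀..r, (r - s) * (a s * (B * (1 - s) ^ (-p)))) ≤
      ∫ s in r₀..r, (r - s) * (B * (p * (p + 1)) * (1 - s) ^ (-p - 2)) :=
    integral_mono_on hr₀r (intervalIntegrable_sub_mul_mul hr₀r ha hv)
      (((continuousOn_const.sub continuousOn_id).mul hcont).intervalIntegrable_of_Icc hr₀r) hsuper
  have hslope : 0 ≤ (r - r₀) * (B * p * (1 - r₀) ^ (-p - 1)) := by
    have : 0 < 1 - r₀ := by linarith
    have : 0 ≤ r - r₀ := by linarith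
    positivity
  linarith

theorem volterra_le_add_of_bounded_on_Icc {u a : ℝ → ℝ} {C M₀ MA r₀ r : ℝ} (hr₀ : 0 ≤ r₀)
    (hr₀r : r₀ ≤ r) (hr : r ≤ 1) (hu : ContinuousOn u (Icc 0 r)) (ha : ContinuousOn a (Icc 0 r))
    (hu0 : ∀ s ∈ Icc 0 r₀, 0 ≤ u s) (ha0 : ∀ s ∈ Icc 0 r₀, 0 ≤ a s)
    (huM : ∀ s ∈ Icc 0 r₀, u s ≤ M₀) (haM : ∀ s ∈ Icc 0 r₀, a s ≤ MA)
    (hvol : u r ≤ C + ∫ s in 0..r, (r - s) * (a s * u s)) :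
    u r ≤ C + r₀ * (MA * M₀) + ∫ s in r₀..r, (r - s) * (a s * u s) := by
  have hIcc₁ : Icc 0 r₀ ⊆ Icc 0 r := Icc_subset_Icc_right hr₀r
  have hIcc₂ : Icc r₀ r ⊆ Icc 0 r := Icc_subset_Icc_left hr₀
  have hint₁ := intervalIntegrable_sub_mul_mul (r := r) hr₀ (ha.mono hIcc₁) (hu.mono hIcc₁)
  have hinit : (∫ s in 0..r₀, (r - s) * (a s * u s)) ≤ ∫ _ in 0..r₀, MA * M₀ := by
    refine integral_mono_on hr₀ hint₁ intervalIntegrable_const fun s hs => ?_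
    have hMA : 0 ≤ MA := (ha0 s hs).trans (haM s hs)
    calc (r - s) * (a s * u s) ≤ 1 * (MA * M₀) :=
          mul_le_mul (by linarith [hs.1]) (mul_le_mul (haM s hs) (huM s hs) (hu0 s hs) hMA)
            (mul_nonneg (ha0 s hs) (hu0 s hs)) zero_le_one
      _ = MA * M₀ := one_mul _
  rw [← integral_add_adjacent_intervals hint₁
    (intervalIntegrable_sub_mul_mul hr₀r (ha.mono hIcc₂) (hu.mono hIcc₂))] at hvol
  simp only [intervalIntegral.integral_const, sub_zero, smul_eq_mul] at hinit
  linarith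

theorem lt_mul_one_sub_rpow_neg_of_volterra_le {u a : ℝ → ℝ} {C M₀ MA p r₀ : ℝ} (hp : 0 ≤ p)
    (hr₀ : r₀ ∈ Ico (0 : ℝ) 1) (hu : ContinuousOn u (Ico 0 1)) (ha : ContinuousOn a (Ico 0 1))
    (hu0 : ∀ s ∈ Ico (0 : ℝ) 1, 0 ≤ u s) (ha0 : ∀ s ∈ Ico (0 : ℝ) 1, 0 ≤ a s)
    (huM : ∀ s ∈ Icc 0 r₀, u s ≤ M₀) (haM : ∀ s ∈ Icc 0 r₀, a s ≤ MA)
    (hal : ∀ s ∈ Ico r₀ 1, a s * (1 - s) ^ 2 ≤ p * (p + 1))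
    (hvol : ∀ r ∈ Ico (0 : ℝ) 1, u r ≤ C + ∫ s in 0..r, (r - s) * (a s * u s)) :
    ∀ r ∈ Ico r₀ 1, u r < (C + r₀ * (MA * M₀) + 1) * (1 - r₀) ^ p * (1 - r) ^ (-p) := by
  have h0 : (0 : ℝ) ∈ Ico (0 : ℝ) 1 := ⟨le_rfl, one_pos⟩
  have h0r₀ : (0 : ℝ) ∈ Icc 0 r₀ := ⟨le_rfl, hr₀.1⟩
  have hC : 0 ≤ C := by simpa using (hu0 0 h0).trans (hvol 0 h0)
  have hM₀ : 0 ≤ M₀ := (hu0 0 h0).trans (huM 0 h0r₀)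
  have hMA : 0 ≤ MA := (ha0 0 h0).trans (haM 0 h0r₀)
  have h1r₀ : 0 < 1 - r₀ := sub_pos.mpr hr₀.2
  have hIco : Ico r₀ 1 ⊆ Ico 0 1 := fun s hs => ⟨hr₀.1.trans hs.1, hs.2⟩
  have hIcc : ∀ r ∈ Ico (0 : ℝ) 1, Icc 0 r ⊆ Ico 0 1 := fun r hr s hs => ⟨hs.1, hs.2.trans_lt hr.2⟩
  have hIcc₀ : Icc 0 r₀ ⊆ Ico 0 1 := hIcc r₀ (hIco ⟨le_rfl, hr₀.2⟩)
  set B := (C + r₀ * (MA * M₀) + 1) * (1 - r₀) ^ p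
  have hB : 0 ≤ B :=
    mul_nonneg (by linarith [mul_nonneg hr₀.1 (mul_nonneg hMA hM₀)]) (Real.rpow_nonneg h1r₀.le p)
  have hv₀ : B * (1 - r₀) ^ (-p) = C + r₀ * (MA * M₀) + 1 := by
    rw [mul_assoc, ← Real.rpow_add h1r₀, add_neg_cancel, Real.rpow_zero, mul_one]
  refine volterra_comparison hr₀.2 (hu.mono hIco) ?_ (ha.mono hIco) (fun s hs => ha0 s (hIco hs))
    (fun r hr => volterra_le_add_of_bounded_on_Icc hr₀.1 hr.1 hr.2.le (hu.mono (hIcc r (hIco hr)))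
      (ha.mono (hIcc r (hIco hr))) (fun s hs => hu0 s (hIcc₀ hs)) (fun s hs => ha0 s (hIcc₀ hs))
      huM haM (hvol r (hIco hr))) fun r hr => ?_
  · exact continuousOn_const.mul <| (continuousOn_const.sub continuousOn_id).rpow_const
      fun s hs => Or.inl (sub_pos.mpr hs.2).ne'
  · have := mul_one_sub_rpow_neg_add_integral_le hp hB hr.1 hr.2
      (ha.mono fun s hs => hIco ⟨hs.1, hs.2.trans_lt hr.2⟩)
      fun s hs => hal s ⟨hs.1, hs.2.trans_lt hr.2⟩
    linarith

theorem norm_apply_ofReal_mul_le_volterra {A f : ℂ → ℂ} (hf : AnalyticOnNhd ℂ f (ball 0 1))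
    (hsol : ∀ z ∈ ball (0 : ℂ) 1, deriv (deriv f) z + A z * f z = 0) {ζ : ℂ} (hζ : ‖ζ‖ = 1)
    {r : ℝ} (hr : r ∈ Ico (0 : ℝ) 1) :
    ‖f (r * ζ)‖ ≤
      ‖f 0‖ + ‖deriv f 0‖ + ∫ s in 0..r, (r - s) * (‖A (s * ζ)‖ * ‖f (s * ζ)‖) := by
  have hmem : ∀ s ∈ Icc 0 r, (s : ℂ) * ζ ∈ ball (0 : ℂ) 1 := fun s hs => by
    rw [mem_ball_zero_iff, norm_mul, hζ, mul_one, norm_real, Real.norm_of_nonneg hs.1]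
    exact hs.2.trans_lt hr.2
  have hd : ∀ s ∈ Icc 0 r,
      HasDerivAt (fun t : ℝ => f (t * ζ)) (deriv f (s * ζ) * ζ) s := fun s hs =>
    ((hf _ (hmem s hs)).differentiableAt.hasDerivAt.comp (s : ℂ)
      (hasDerivAt_mul_const ζ)).comp_ofReal
  have hd' : ∀ s ∈ Icc 0 r, HasDerivAt (fun t : ℝ => deriv f (t * ζ) * ζ)
      (deriv (deriv f) (s * ζ) * ζ * ζ) s := fun s hs => by
    have h : HasDerivAt (deriv f) (deriv (deriv f) (s * ζ)) (s * ζ) :=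
      (hf.deriv _ (hmem s hs)).differentiableAt.hasDerivAt
    exact ((h.comp (s : ℂ) (hasDerivAt_mul_const ζ)).mul_const ζ).comp_ofReal
  have hcont : ContinuousOn (fun s : ℝ => deriv (deriv f) (s * ζ) * ζ * ζ) (Icc 0 r) :=
    ((hf.deriv.deriv.continuousOn.comp (continuous_ofReal.mul continuous_const).continuousOn
      hmem).mul continuousOn_const).mul continuousOn_const
  have htaylor := taylor_integral_remainder_two hr.1 hd hd' hcont
  simp only [ofReal_zero, zero_mul, sub_zero] at htaylor
  have hlin : ‖r • (deriv f 0 * ζ)‖ ≤ ‖deriv f 0‖ := by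
    rw [norm_smul, norm_mul, hζ, mul_one, Real.norm_of_nonneg hr.1]
    exact mul_le_of_le_one_left (norm_nonneg _) hr.2.le
  have hrem : ‖∫ s in 0..r, (r - s) • (deriv (deriv f) (s * ζ) * ζ * ζ)‖ ≤
      ∫ s in 0..r, (r - s) * (‖A (s * ζ)‖ * ‖f (s * ζ)‖) := by
    refine (intervalIntegral.norm_integral_le_integral_norm hr.1).trans_eq
      (integral_congr fun s hs => ?_)
    rw [uIcc_of_le hr.1] at hs
    rw [eq_neg_of_add_eq_zero_left (hsol _ (hmem s hs)), norm_smul, norm_mul, norm_mul, norm_neg,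
      norm_mul, hζ, Real.norm_of_nonneg (sub_nonneg.mpr hs.2), mul_one, mul_one]
  rw [htaylor]
  calc _ ≤ ‖f 0‖ + ‖r • (deriv f 0 * ζ)‖ +
        ‖∫ s in 0..r, (r - s) • (deriv (deriv f) (s * ζ) * ζ * ζ)‖ := norm_add₃_le
    _ ≤ _ := by gcongr

theorem exists_norm_le_mul_one_sub_rpow_neg {A f : ℂ → ℂ} (hA : ContinuousOn A (ball 0 1))
    (hf : AnalyticOnNhd ℂ f (ball 0 1))
    (hsol : ∀ z ∈ ball (0 : ℂ) 1, deriv (deriv f) z + A z * f z = 0) {p r₀ : ℝ} (hp : 0 ≤ p)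
    (hr₀ : r₀ ∈ Ico (0 : ℝ) 1)
    (hAl : ∀ z ∈ ball (0 : ℂ) 1, r₀ ≤ ‖z‖ → ‖A z‖ * (1 - ‖z‖) ^ 2 ≤ p * (p + 1)) :
    ∃ B, ∀ z ∈ ball (0 : ℂ) 1, r₀ ≤ ‖z‖ → ‖f z‖ ≤ B * (1 - ‖z‖) ^ (-p) := by
  have hsub : closedBall (0 : ℂ) r₀ ⊆ ball 0 1 := closedBall_subset_ball hr₀.2
  obtain ⟨M₀, hM₀⟩ := (isCompact_closedBall (0 : ℂ) r₀).exists_bound_of_continuousOn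
    (hf.continuousOn.mono hsub)
  obtain ⟨MA, hMA⟩ := (isCompact_closedBall (0 : ℂ) r₀).exists_bound_of_continuousOn
    (hA.mono hsub)
  refine ⟨(‖f 0‖ + ‖deriv f 0‖ + r₀ * (MA * M₀) + 1) * (1 - r₀) ^ p, fun z hz hz₀ => ?_⟩
  set ζ := exp (arg z * I)
  have hnorm : ∀ s : ℝ, 0 ≤ s → ‖(s : ℂ) * ζ‖ = s := fun s hs => by
    rw [norm_mul, norm_exp_ofReal_mul_I, mul_one, norm_real, Real.norm_of_nonneg hs]
  have hray : MapsTo (fun s : ℝ => (s : ℂ) * ζ) (Ico 0 1) (ball 0 1) := fun s hs =>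
    mem_ball_zero_iff.mpr ((hnorm s hs.1).trans_lt hs.2)
  have hdisc : ∀ s ∈ Icc 0 r₀, (s : ℂ) * ζ ∈ closedBall (0 : ℂ) r₀ := fun s hs =>
    mem_closedBall_zero_iff.mpr ((hnorm s hs.1).trans_le hs.2)
  have hcont : ContinuousOn (fun s : ℝ => (s : ℂ) * ζ) (Ico 0 1) :=
    (continuous_ofReal.mul continuous_const).continuousOn
  have hal : ∀ s ∈ Ico r₀ 1, ‖A (s * ζ)‖ * (1 - s) ^ 2 ≤ p * (p + 1) := fun s hs => by
    have hs₀ : 0 ≤ s := hr₀.1.trans hs.1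
    simpa only [hnorm s hs₀] using
      hAl _ (hray ⟨hs₀, hs.2⟩) ((hnorm s hs₀).symm ▸ hs.1)
  have := lt_mul_one_sub_rpow_neg_of_volterra_le (u := fun s => ‖f (s * ζ)‖)
    (a := fun s => ‖A (s * ζ)‖) hp hr₀ (hf.continuousOn.comp hcont hray).norm
    (hA.comp hcont hray).norm (fun _ _ => norm_nonneg _) (fun _ _ => norm_nonneg _)
    (fun s hs => hM₀ _ (hdisc s hs)) (fun s hs => hMA _ (hdisc s hs)) hal
    (fun r hr => norm_apply_ofReal_mul_le_volterra hf hsol (norm_exp_ofReal_mul_I _) hr)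
    ‖z‖ ⟨hz₀, mem_ball_zero_iff.mp hz⟩
  rw [norm_mul_exp_arg_mul_I] at this
  exact this.le

theorem exists_norm_mul_one_sub_sq_rpow_le {f : ℂ → ℂ} (hf : ContinuousOn f (ball 0 1))
    {p r₀ B : ℝ} (hp : 0 ≤ p) (hr₀ : r₀ < 1)
    (hB : ∀ z ∈ ball (0 : ℂ) 1, r₀ ≤ ‖z‖ → ‖f z‖ ≤ B * (1 - ‖z‖) ^ (-p)) :
    ∃ M, ∀ z ∈ ball (0 : ℂ) 1, ‖f z‖ * (1 - ‖z‖ ^ 2) ^ p ≤ M := by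
  obtain ⟨M₀, hM₀⟩ := (isCompact_closedBall (0 : ℂ) r₀).exists_bound_of_continuousOn
    (hf.mono (closedBall_subset_ball hr₀))
  refine ⟨max M₀ (B * 2 ^ p), fun z hz => ?_⟩
  have h1z : 0 < 1 - ‖z‖ := sub_pos.mpr (mem_ball_zero_iff.mp hz)
  rcases lt_or_ge ‖z‖ r₀ with hlt | hge
  · have hw : (1 - ‖z‖ ^ 2) ^ p ≤ 1 :=
      Real.rpow_le_one (by nlinarith [norm_nonneg z]) (by nlinarith [norm_nonneg z]) hp
    calc ‖f z‖ * (1 - ‖z‖ ^ 2) ^ p ≤ ‖f z‖ := mul_le_of_le_one_right (norm_nonneg _) hw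
      _ ≤ M₀ := hM₀ z (mem_closedBall_zero_iff.mpr hlt.le)
      _ ≤ _ := le_max_left _ _
  · have hw : ‖f z‖ * (1 - ‖z‖) ^ p ≤ B := by
      have := mul_le_mul_of_nonneg_right (hB z hz hge) (Real.rpow_nonneg h1z.le p)
      rwa [mul_assoc, ← Real.rpow_add h1z, neg_add_cancel, Real.rpow_zero, mul_one] at this
    calc ‖f z‖ * (1 - ‖z‖ ^ 2) ^ p = ‖f z‖ * (1 - ‖z‖) ^ p * (1 + ‖z‖) ^ p := by
          rw [mul_assoc, ← Real.mul_rpow h1z.le (by positivity)]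
          ring_nf
      _ ≤ B * 2 ^ p :=
          mul_le_mul hw (Real.rpow_le_rpow (by positivity) (by linarith [h1z]) hp)
            (by positivity) ((mul_nonneg (norm_nonneg _) (Real.rpow_nonneg h1z.le p)).trans hw)
      _ ≤ _ := le_max_right _ _

theorem exists_norm_mul_one_sub_sq_le_of_tendsto {A : ℂ → ℂ} {K l : ℝ} {ε : ℝ → ℝ}
    (hε : Tendsto ε (𝓝[<] 1) (𝓝 0))
    (hbound : ∀ z ∈ ball (0 : ℂ) 1, ‖A z‖ * (1 - ‖z‖ ^ 2) ^ 2 ≤ K + ε ‖z‖) (hK : K < 4 * l) :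
    ∃ r₀ ∈ Ico (0 : ℝ) 1, ∀ z ∈ ball (0 : ℂ) 1, r₀ ≤ ‖z‖ → ‖A z‖ * (1 - ‖z‖) ^ 2 ≤ l := by
  have hlim : Tendsto (fun s : ℝ => l * (1 + s) ^ 2) (𝓝[<] 1) (𝓝 (l * (1 + 1) ^ 2)) :=
    (((continuous_const.add continuous_id).pow 2).const_mul l).tendsto 1 |>.mono_left
      nhdsWithin_le_nhds
  have hev : ∀ᶠ s in 𝓝[<] (1 : ℝ), K + ε s < l * (1 + s) ^ 2 :=
    (tendsto_const_nhds.add hε).eventually_lt hlim (by linarith)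
  obtain ⟨b, hb1, hb⟩ := mem_nhdsLT_iff_exists_Ioo_subset.mp hev
  refine ⟨max 0 ((b + 1) / 2), ⟨le_max_left _ _, max_lt one_pos (by linarith [mem_Iio.mp hb1])⟩,
    fun z hz hz₀ => ?_⟩
  have hzb : ‖z‖ ∈ Ioo b 1 :=
    ⟨by linarith [le_max_right 0 ((b + 1) / 2), mem_Iio.mp hb1], mem_ball_zero_iff.mp hz⟩
  refine le_of_mul_le_mul_right ?_ (by positivity : 0 < (1 + ‖z‖) ^ 2)
  calc ‖A z‖ * (1 - ‖z‖) ^ 2 * (1 + ‖z‖) ^ 2 = ‖A z‖ * (1 - ‖z‖ ^ 2) ^ 2 := by ring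
    _ ≤ l * (1 + ‖z‖) ^ 2 := (hbound z hz).trans (hb hzb).le

theorem stmt_2 (A : ℂ → ℂ) (hA : AnalyticOnNhd ℂ A (ball (0:ℂ) 1))
    (K : ℝ) (hK : 0 ≤ K) (ε : ℝ → ℝ)
    (hεlim : Tendsto ε (𝓝[<] (1:ℝ)) (𝓝 0))
    (hbound : ∀ z ∈ ball (0:ℂ) 1,
      ‖A z‖ * (1 - ‖z‖ ^ 2) ^ 2 ≤ K + ε ‖z‖)
    (f : ℂ → ℂ) (hf : AnalyticOnNhd ℂ f (ball (0:ℂ) 1))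
    (hsol : ∀ z ∈ ball (0:ℂ) 1, deriv (deriv f) z + A z * f z = 0) :
    ∀ p : ℝ, (Real.sqrt (1 + K) - 1) / 2 < p →
      ∃ M : ℝ, ∀ z ∈ ball (0:ℂ) 1,
        ‖f z‖ * (1 - ‖z‖ ^ 2) ^ p ≤ M := by
  intro p hp
  have hsqrt : 1 ≤ Real.sqrt (1 + K) := Real.one_le_sqrt.mpr (by linarith)
  have hp0 : 0 ≤ p := by linarith
  have hKp : K < 4 * (p * (p + 1)) := by
    nlinarith [Real.sq_sqrt (by linarith : (0 : ℝ) ≤ 1 + K)]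
  obtain ⟨r₀, hr₀, hAl⟩ := exists_norm_mul_one_sub_sq_le_of_tendsto hεlim hbound hKp
  obtain ⟨B, hB⟩ := exists_norm_le_mul_one_sub_rpow_neg hA.continuousOn hf hsol hp0 hr₀ hAl
  exact exists_norm_mul_one_sub_sq_rpow_le hf.continuousOn hp0 hr₀.2 hB
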